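/- Fix κ ≥ 0 and c > 0. For σ > 0 define σ̃(σ) = √(σ² + κ²), let z*(σ) be the unique solution of φ(z) − z·Φᶜ(z) = (σ̃(σ)/σ²)·c, and let τ̃*(σ) = σ̃(σ)·z*(σ). Suppose σ₁ > σ₂ > 0 and c is small enough that τ̃*(σ₂) > 0 (equivalently, c < (σ₂²/σ̃(σ₂))·(2π)^(−1/2)). Then τ̃*(σ₁) > τ̃*(σ₂). -/

import Mathlib

/-!
The normal loss function `ψ(z) = E[(X - z)⁺] = φ(z) - z Φᶜ(z)` has derivative `-Φᶜ(z) < 0`, so it is strictly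
decreasing, and the cost term `√(σ² + κ²) / σ² · c` is strictly decreasing in `σ`. Hence the
larger spread `σ₁` gives the larger standardized threshold `z₁ > z₂`. The viability condition says
exactly that `ψ(z₂) < ψ(0) = (2π)^(-1/2)`, i.e. `z₂ > 0`, so the larger scale `σ̃(σ₁) > σ̃(σ₂)` also
multiplies a positive number and `σ̃(σ₁) z₁ > σ̃(σ₁) z₂ > σ̃(σ₂) z₂`.
-/

open MeasureTheory ProbabilityTheory Real

noncomputable def stdPdf (x : ℝ) : ℝ := (Real.sqrt (2 * Real.pi))⁻¹ * Real.exp (-(x ^ 2) / 2)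

noncomputable def stdCdf (x : ℝ) : ℝ := ∫ u in Set.Iic x, stdPdf u

noncomputable def stdCcdf (x : ℝ) : ℝ := 1 - stdCdf x

noncomputable def hazard (x : ℝ) : ℝ := stdPdf x / stdCcdf x

theorem hasDerivAt_integral_Iic {E : Type*} [NormedAddCommGroup E] [NormedSpace ℝ E]
    [CompleteSpace E] {f : ℝ → E} (hf : Integrable f) (hc : Continuous f) (x : ℝ) :
    HasDerivAt (fun y => ∫ u in Set.Iic y, f u) (f x) x := by
  have hsplit : (fun y => ∫ u in Set.Iic y, f u) =
      fun y => (∫ u in (0 : ℝ)..y, f u) + ∫ u in Set.Iic 0, f u := by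
    funext y
    rw [← intervalIntegral.integral_Iic_sub_Iic hf.integrableOn hf.integrableOn, sub_add_cancel]
  rw [hsplit]
  exact (intervalIntegral.integral_hasDerivAt_right hf.intervalIntegrable
    hc.aestronglyMeasurable.stronglyMeasurableAtFilter hc.continuousAt).add_const _

theorem stdPdf_eq_gaussianPDFReal : stdPdf = gaussianPDFReal 0 1 := by
  funext x
  simp [stdPdf, gaussianPDFReal]

theorem integrable_stdPdf : Integrable stdPdf :=
  stdPdf_eq_gaussianPDFReal ▸ integrable_gaussianPDFReal 0 1

theorem continuous_stdPdf : Continuous stdPdf := by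
  unfold stdPdf
  fun_prop

theorem stdPdf_pos (x : ℝ) : 0 < stdPdf x := by
  unfold stdPdf
  positivity

theorem hasDerivAt_stdPdf (x : ℝ) : HasDerivAt stdPdf (-x * stdPdf x) x := by
  have hexponent : HasDerivAt (fun y : ℝ => -(y ^ 2) / 2) (-x) x :=
    ((hasDerivAt_pow 2 x).fun_neg.div_const 2).congr_deriv (by ring)
  exact (hexponent.exp.const_mul _).congr_deriv (by rw [stdPdf]; ring)

theorem stdCcdf_eq_integral_Ioi (x : ℝ) : stdCcdf x = ∫ u in Set.Ioi x, stdPdf u := by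
  have htotal : ∫ u, stdPdf u = 1 := by
    rw [stdPdf_eq_gaussianPDFReal, integral_gaussianPDFReal_eq_one 0 one_ne_zero]
  rw [stdCcdf, stdCdf, ← htotal, ← Set.compl_Iic,
    ← integral_add_compl measurableSet_Iic integrable_stdPdf, add_sub_cancel_left]

theorem stdCcdf_pos (x : ℝ) : 0 < stdCcdf x := by
  rw [stdCcdf_eq_integral_Ioi, setIntegral_pos_iff_support_of_nonneg_ae
    (.of_forall fun y => (stdPdf_pos y).le) integrable_stdPdf.integrableOn,
    Function.support_eq_univ fun y => (stdPdf_pos y).ne', Set.univ_inter]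
  simp

theorem hasDerivAt_stdCcdf (x : ℝ) : HasDerivAt stdCcdf (-stdPdf x) x :=
  (hasDerivAt_integral_Iic integrable_stdPdf continuous_stdPdf x).const_sub 1

noncomputable def stdLoss (z : ℝ) : ℝ := stdPdf z - z * stdCcdf z

theorem hasDerivAt_stdLoss (z : ℝ) : HasDerivAt stdLoss (-stdCcdf z) z :=
  ((hasDerivAt_stdPdf z).fun_sub ((hasDerivAt_id' z).fun_mul (hasDerivAt_stdCcdf z))).congr_deriv
    (by ring)

theorem strictAnti_stdLoss : StrictAnti stdLoss :=
  strictAnti_of_hasDerivAt_neg hasDerivAt_stdLoss fun z => neg_neg_of_pos (stdCcdf_pos z)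

theorem stdLoss_zero : stdLoss 0 = (Real.sqrt (2 * Real.pi))⁻¹ := by
  simp [stdLoss, stdPdf]

theorem pos_of_stdLoss_lt {z : ℝ} (h : stdLoss z < (Real.sqrt (2 * Real.pi))⁻¹) : 0 < z :=
  strictAnti_stdLoss.lt_iff_gt.mp (stdLoss_zero ▸ h)

theorem strictAntiOn_sqrt_sq_add_sq_div_sq (κ : ℝ) :
    StrictAntiOn (fun σ : ℝ => Real.sqrt (σ ^ 2 + κ ^ 2) / σ ^ 2) (Set.Ioi 0) := by
  intro s (hs : 0 < s) t (ht : 0 < t) hst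
  have key : ∀ σ : ℝ, 0 < σ →
      Real.sqrt (σ ^ 2 + κ ^ 2) / σ ^ 2 = Real.sqrt ((σ ^ 2)⁻¹ + κ ^ 2 * ((σ ^ 2)⁻¹) ^ 2) := by
    intro σ hσ
    rw [← Real.sqrt_sq (by positivity : 0 ≤ σ ^ 2), ← Real.sqrt_div' _ (by positivity),
      Real.sqrt_sq (by positivity)]
    congr 1
    field_simp
  have hinv : (t ^ 2)⁻¹ < (s ^ 2)⁻¹ :=
    inv_strictAnti₀ (pow_pos hs 2) (pow_lt_pow_left₀ hst hs.le two_ne_zero)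
  dsimp only
  rw [key s hs, key t ht]
  exact Real.sqrt_lt_sqrt (by positivity) (add_lt_add_of_lt_of_le hinv (by gcongr))

theorem optimal_threshold_mono_in_sigma_general (κ c σ₁ σ₂ z₁ z₂ : ℝ)
    (hc : 0 < c) (hσ : σ₁ > σ₂) (hσ₂ : σ₂ > 0)
    (hz₁ : stdPdf z₁ - z₁ * stdCcdf z₁ = Real.sqrt (σ₁ ^ 2 + κ ^ 2) / σ₁ ^ 2 * c)
    (hz₂ : stdPdf z₂ - z₂ * stdCcdf z₂ = Real.sqrt (σ₂ ^ 2 + κ ^ 2) / σ₂ ^ 2 * c)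
    (hviable : c < σ₂ ^ 2 / Real.sqrt (σ₂ ^ 2 + κ ^ 2) / Real.sqrt (2 * Real.pi)) :
    Real.sqrt (σ₁ ^ 2 + κ ^ 2) * z₁ > Real.sqrt (σ₂ ^ 2 + κ ^ 2) * z₂ := by
  have hz : z₂ < z₁ := strictAnti_stdLoss.lt_iff_gt.mp <| by
    rw [stdLoss, stdLoss, hz₁, hz₂]
    exact mul_lt_mul_of_pos_right
      (strictAntiOn_sqrt_sq_add_sq_div_sq κ hσ₂ (hσ₂.trans hσ) hσ) hc
  have hz₂_pos : 0 < z₂ := pos_of_stdLoss_lt <| by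
    have hs : 0 < Real.sqrt (σ₂ ^ 2 + κ ^ 2) := by positivity
    rw [stdLoss, hz₂, lt_inv_comm₀ (by positivity) (by positivity)]
    rw [div_div, lt_div_iff₀ (by positivity)] at hviable
    field_simp
    linarith
  have hsqrt : Real.sqrt (σ₂ ^ 2 + κ ^ 2) < Real.sqrt (σ₁ ^ 2 + κ ^ 2) :=
    Real.sqrt_lt_sqrt (by positivity) (by gcongr)
  exact mul_lt_mul hsqrt hz.le hz₂_pos (Real.sqrt_nonneg _)

/-- A more diverse applicant pool yields a higher optimal threshold. With noise level
`κ ≥ 0`, `σ̃(σ) = √(σ² + κ²)`, and `z*(σ)` the unique solution of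
`φ(z) − z·Φᶜ(z) = (σ̃(σ)/σ²)·c`, if `σ₁ > σ₂ > 0` and `c` satisfies the viability condition
`c < (σ₂²/σ̃(σ₂))·(2π)^(−1/2)`, then `τ̃*(σ₁) = σ̃(σ₁)·z*(σ₁) > σ̃(σ₂)·z*(σ₂) = τ̃*(σ₂)`. -/
theorem optimal_threshold_mono_in_sigma (κ c σ₁ σ₂ z₁ z₂ : ℝ)
    (hκ : 0 ≤ κ) (hc : 0 < c) (hσ : σ₁ > σ₂) (hσ₂ : σ₂ > 0)
    (hz₁ : stdPdf z₁ - z₁ * stdCcdf z₁ = Real.sqrt (σ₁ ^ 2 + κ ^ 2) / σ₁ ^ 2 * c)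
    (hz₂ : stdPdf z₂ - z₂ * stdCcdf z₂ = Real.sqrt (σ₂ ^ 2 + κ ^ 2) / σ₂ ^ 2 * c)
    (hviable : c < σ₂ ^ 2 / Real.sqrt (σ₂ ^ 2 + κ ^ 2) / Real.sqrt (2 * Real.pi)) :
    Real.sqrt (σ₁ ^ 2 + κ ^ 2) * z₁ > Real.sqrt (σ₂ ^ 2 + κ ^ 2) * z₂ :=
  optimal_threshold_mono_in_sigma_general κ c σ₁ σ₂ z₁ z₂ hc hσ hσ₂ hz₁ hz₂ hviable
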